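/- Every x ∈ ℝ^n satisfying F̃(x) = 0 obeys, for each 1 ≤ i ≤ n−1, the back-substitution identity x_i · Π_{j=i+1}^{n} ã_{j,j−1} = x_n S_{i+1}^{n} + ã_{i+1,0} Π_{j=i+2}^{n} ã_{j,j−1} + Σ_{k=i+2}^{n} ã_{k0} (Π_{l=k+1}^{n} ã_{l,l−1}) S_{i+1}^{k−1}. -/

import Mathlib

/-!
Both sides of the identity, as functions of `i`, satisfy the three-term recurrence
`y_i = ã_{i+1,0} Π_{j=i+2}^{n} ã_{j,j−1} + ã_{i+1,i+1} y_{i+1} + ã_{i+1,i+2} ã_{i+2,i+1} y_{i+2}`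
for `1 ≤ i ≤ n−2`: the left side by the equation `F̃_{i+1}(x) = 0`, the right side because
`S_a^b` is a continuant, `S_a^b = ã_{aa} S_{a+1}^b + ã_{a,a+1} ã_{a+1,a} S_{a+2}^b`, which comes
from splitting `A_a^b` according to whether `σ` fixes `a` or swaps `a` and `a+1`. The two sides
agree at `i = n` and, by `F̃_n(x) = 0`, at `i = n−1`, hence everywhere.
-/

/-- The set `A_a^b` of involutive permutations of `ℕ` that fix every point outside
`{a, …, b}` and move every point by at most one (products of disjoint transpositions
of the form `(i i+1)` supported in `{a, …, b}`). -/
def Aset (a b : ℕ) : Set (Equiv.Perm ℕ) :=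
  {σ | σ * σ = 1 ∧ (∀ j, j ∉ Finset.Icc a b → σ j = j) ∧
    ∀ j, |((σ j : ℤ)) - (j : ℤ)| ≤ 1}

/-- `S_a^b = Σ_{σ ∈ A_a^b} Π_{j=a}^{b} ã_{j,σ(j)}` (equal to `1` when `a > b`). -/
noncomputable def Ssum (ta : ℕ → ℕ → ℝ) (a b : ℕ) : ℝ :=
  ∑ᶠ σ ∈ Aset a b, ∏ j ∈ Finset.Icc a b, ta j (σ j)

/-- `δ̃(m) = ã_{10} Π_{j=2}^{m} ã_{j,j−1} − Σ_{k=2}^{m} ã_{k0} (Π_{l=k+1}^{m} ã_{l,l−1}) S_1^{k−1}`. -/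
noncomputable def deltaT (ta : ℕ → ℕ → ℝ) (m : ℕ) : ℝ :=
  ta 1 0 * ∏ j ∈ Finset.Icc 2 m, ta j (j - 1) -
    ∑ k ∈ Finset.Icc 2 m, ta k 0 * (∏ l ∈ Finset.Icc (k + 1) m, ta l (l - 1)) * Ssum ta 1 (k - 1)

/-- The drift field `F̃` of the Lotka–Volterra food chain (components indexed by `1 ≤ i ≤ n`). -/
def Ft (n : ℕ) (ta : ℕ → ℕ → ℝ) (x : ℕ → ℝ) (i : ℕ) : ℝ :=
  if i = 1 then ta 1 0 - ta 1 1 * x 1 - ta 1 2 * x 2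
  else if i = n then -ta n 0 + ta n (n - 1) * x (n - 1) - ta n n * x n
  else -ta i 0 + ta i (i - 1) * x (i - 1) - ta i i * x i - ta i (i + 1) * x (i + 1)

open Finset Equiv

@[to_additive]
lemma Finset.prod_Icc_eq_mul_prod_Icc_succ {M : Type*} [CommMonoid M] (f : ℕ → M) {a b : ℕ}
    (h : a ≤ b) : ∏ j ∈ Icc a b, f j = f a * ∏ j ∈ Icc (a + 1) b, f j := by
  rw [← insert_Icc_add_one_left_eq_Icc h, prod_insert (by simp)]

namespace Aset

variable {a b : ℕ} {σ τ : Perm ℕ}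

lemma one_mem (a b : ℕ) : (1 : Perm ℕ) ∈ Aset a b :=
  ⟨rfl, fun _ _ => rfl, fun j => by simp⟩

lemma apply_apply (hσ : σ ∈ Aset a b) (j : ℕ) : σ (σ j) = j :=
  congrArg (· j) hσ.1

lemma apply_of_notMem (hσ : σ ∈ Aset a b) {j : ℕ} (hj : j ∉ Icc a b) : σ j = j :=
  hσ.2.1 j hj

lemma apply_left_eq_or (hσ : σ ∈ Aset a b) : σ a = a ∨ (σ a = a + 1 ∧ a + 1 ≤ b) := by
  have hdist := abs_le.mp (hσ.2.2 a)
  rcases (by omega : σ a = a ∨ σ a = a + 1 ∨ (σ a : ℤ) = a - 1) with h | h | h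
  · exact Or.inl h
  · refine Or.inr ⟨h, by_contra fun hb => ?_⟩
    have := σ.injective
      (h.trans (apply_of_notMem hσ (j := a + 1) (by simp only [mem_Icc]; omega)).symm)
    omega
  · have := σ.injective ((show σ a = a - 1 by omega).trans
      (apply_of_notMem hσ (j := a - 1) (by simp only [mem_Icc]; omega)).symm)
    omega

lemma mem_succ_iff : σ ∈ Aset (a + 1) b ↔ σ ∈ Aset a b ∧ σ a = a := by
  refine ⟨fun hσ =>
    ⟨⟨hσ.1, fun j hj => hσ.2.1 j (by simp only [mem_Icc] at hj ⊢; omega), hσ.2.2⟩,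
    apply_of_notMem hσ (by simp)⟩, fun ⟨hσ, ha⟩ => ⟨hσ.1, fun j hj => ?_, hσ.2.2⟩⟩
  rcases eq_or_ne j a with rfl | hja
  · exact ha
  · exact hσ.2.1 j (by simp only [mem_Icc] at hj ⊢; omega)

lemma eq_singleton_one_of_lt (h : b < a) : Aset a b = {1} := by
  refine Set.eq_singleton_iff_unique_mem.mpr ⟨one_mem a b, fun σ hσ => ?_⟩
  ext j
  exact apply_of_notMem hσ (by simp only [mem_Icc]; omega)

lemma self_eq_singleton_one : Aset a a = {1} := by
  refine Set.eq_singleton_iff_unique_mem.mpr ⟨one_mem a a, fun σ hσ => ?_⟩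
  rcases apply_left_eq_or hσ with ha | ⟨-, h⟩
  · have : σ ∈ Aset (a + 1) a := mem_succ_iff.mpr ⟨hσ, ha⟩
    rwa [eq_singleton_one_of_lt (Nat.lt_succ_self a)] at this
  · omega

lemma swap_mul_mul_self_and_apply {x y : ℕ} (hσ : σ * σ = 1)
    (hxy : swap (σ x) (σ y) = swap x y) :
    (swap x y * σ) * (swap x y * σ) = 1 ∧ ∀ j, (swap x y * σ) j = σ (swap x y j) := by
  have hc : swap x y * σ = σ * swap x y := by rw [mul_swap_eq_swap_mul, hxy]
  refine ⟨?_, fun j => by rw [hc, Perm.mul_apply]⟩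
  rw [mul_assoc, ← mul_assoc σ, ← hc, ← mul_assoc, ← mul_assoc, swap_mul_self, one_mul,
    hσ]

lemma swap_mul_mem (hab : a + 1 ≤ b) (hτ : τ ∈ Aset (a + 2) b) :
    swap a (a + 1) * τ ∈ Aset a b := by
  have ha : τ a = a := apply_of_notMem hτ (by simp)
  have ha1 : τ (a + 1) = a + 1 := apply_of_notMem hτ (by simp)
  obtain ⟨hinv, happ⟩ := swap_mul_mul_self_and_apply (x := a) (y := a + 1) hτ.1
    (by rw [ha, ha1])
  refine ⟨hinv, fun j hj => ?_, fun j => ?_⟩ <;> rw [happ, swap_apply_def]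
  · simp only [mem_Icc, not_and_or, not_le] at hj
    rw [if_neg (by omega), if_neg (by omega),
      apply_of_notMem hτ (by simp only [mem_Icc]; omega)]
  · split_ifs with h h' <;> subst_vars
    · rw [ha1]; simp
    · rw [ha]; simp
    · exact hτ.2.2 j

lemma swap_mul_mem_of_apply_eq (hσ : σ ∈ Aset a b) (ha : σ a = a + 1) :
    swap a (a + 1) * σ ∈ Aset (a + 2) b := by
  have ha1 : σ (a + 1) = a := by rw [← ha, apply_apply hσ]
  obtain ⟨hinv, happ⟩ := swap_mul_mul_self_and_apply (x := a) (y := a + 1) hσ.1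
    (by rw [ha, ha1, swap_comm])
  refine ⟨hinv, fun j hj => ?_, fun j => ?_⟩ <;> rw [happ, swap_apply_def]
  · split_ifs with h h' <;> subst_vars
    · exact ha1
    · exact ha
    · exact apply_of_notMem hσ (by simp only [mem_Icc] at hj ⊢; omega)
  · split_ifs with h h' <;> subst_vars
    · rw [ha1]; simp
    · rw [ha]; simp
    · exact hσ.2.2 j

lemma eq_union (hab : a + 1 ≤ b) :
    Aset a b = Aset (a + 1) b ∪ (swap a (a + 1) * ·) '' Aset (a + 2) b := by
  ext σ
  refine ⟨fun hσ => ?_, ?_⟩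
  · rcases apply_left_eq_or hσ with ha | ⟨ha, -⟩
    · exact Or.inl (mem_succ_iff.mpr ⟨hσ, ha⟩)
    · exact Or.inr ⟨_, swap_mul_mem_of_apply_eq hσ ha, by simp [← mul_assoc]⟩
  · rintro (hσ | ⟨τ, hτ, rfl⟩)
    · exact (mem_succ_iff.mp hσ).1
    · exact swap_mul_mem hab hτ

lemma finite (a b : ℕ) : (Aset a b).Finite := by
  induction h : b - a using Nat.strong_induction_on generalizing a with
  | _ d ih =>
    by_cases hab : a + 1 ≤ b
    · rw [eq_union hab]
      exact (ih _ (by omega) (a + 1) rfl).union ((ih _ (by omega) (a + 2) rfl).image _)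
    · rcases Nat.lt_or_ge b a with hlt | hge
      · rw [eq_singleton_one_of_lt hlt]; exact Set.finite_singleton _
      · rw [show b = a by omega, self_eq_singleton_one]; exact Set.finite_singleton _

end Aset

section Ssum
variable {ta : ℕ → ℕ → ℝ} {a b : ℕ}

lemma Ssum_of_lt (h : b < a) : Ssum ta a b = 1 := by
  rw [Ssum, Aset.eq_singleton_one_of_lt h, finsum_mem_singleton, Icc_eq_empty_of_lt h,
    prod_empty]

lemma Ssum_self : Ssum ta a a = ta a a := by
  rw [Ssum, Aset.self_eq_singleton_one, finsum_mem_singleton, Icc_self, prod_singleton,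
    Perm.one_apply]

lemma Ssum_eq (hab : a + 1 ≤ b) :
    Ssum ta a b =
      ta a a * Ssum ta (a + 1) b + ta a (a + 1) * ta (a + 1) a * Ssum ta (a + 2) b := by
  have hdisj : Disjoint (Aset (a + 1) b) ((swap a (a + 1) * ·) '' Aset (a + 2) b) := by
    refine Set.disjoint_left.mpr fun σ hσ ⟨τ, hτ, hστ⟩ => ?_
    have hτa : τ a = a := Aset.apply_of_notMem hτ (by simp)
    have := (Aset.mem_succ_iff.mp hσ).2
    simp [← hστ, hτa] at this
  have hfix : ∀ σ ∈ Aset (a + 1) b,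
      ∏ j ∈ Icc a b, ta j (σ j) = ta a a * ∏ j ∈ Icc (a + 1) b, ta j (σ j) :=
    fun σ hσ => by rw [prod_Icc_eq_mul_prod_Icc_succ _ (by omega), (Aset.mem_succ_iff.mp hσ).2]
  have hswap : ∀ τ ∈ Aset (a + 2) b, ∏ j ∈ Icc a b, ta j ((swap a (a + 1) * τ) j) =
      ta a (a + 1) * ta (a + 1) a * ∏ j ∈ Icc (a + 2) b, ta j (τ j) := fun τ hτ => by
    have hτa : τ a = a := Aset.apply_of_notMem hτ (by simp)
    have hτa1 : τ (a + 1) = a + 1 := Aset.apply_of_notMem hτ (by simp)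
    rw [prod_Icc_eq_mul_prod_Icc_succ _ (by omega), prod_Icc_eq_mul_prod_Icc_succ _ (by omega),
      ← mul_assoc]
    refine congrArg₂ _ (by simp [hτa, hτa1]) (prod_congr rfl fun j hj => ?_)
    simp only [mem_Icc] at hj
    rw [Perm.mul_apply, swap_apply_of_ne_of_ne]
    · exact fun h => by have := τ.injective (h.trans hτa.symm); omega
    · exact fun h => by have := τ.injective (h.trans hτa1.symm); omega
  rw [Ssum, Aset.eq_union hab,
    finsum_mem_union hdisj (Aset.finite _ _) ((Aset.finite _ _).image _),
    finsum_mem_congr rfl hfix, finsum_mem_image (fun _ _ _ _ h => mul_left_cancel h),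
    finsum_mem_congr rfl hswap, Ssum, Ssum, mul_finsum_mem, mul_finsum_mem]

end Ssum

lemma eq_of_linear_recurrence {u v α β γ : ℕ → ℝ} {l n : ℕ}
    (hu : ∀ i, l ≤ i → i + 2 ≤ n → u i = α i + β i * u (i + 1) + γ i * u (i + 2))
    (hv : ∀ i, l ≤ i → i + 2 ≤ n → v i = α i + β i * v (i + 1) + γ i * v (i + 2))
    (hn : u n = v n) (hn1 : u (n - 1) = v (n - 1)) {i : ℕ} (hli : l ≤ i) (hin : i ≤ n) :
    u i = v i := by
  induction h : n - i using Nat.strong_induction_on generalizing i with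
  | _ d ih =>
    rcases (by omega : i = n ∨ i = n - 1 ∨ i + 2 ≤ n) with rfl | rfl | hi2
    · exact hn
    · exact hn1
    · rw [hu i hli hi2, hv i hli hi2, ih _ (by omega) (by omega) (by omega) rfl,
        ih _ (by omega) (by omega) (by omega) rfl]

noncomputable def backSum (ta : ℕ → ℕ → ℝ) (c : ℕ → ℝ) (i m : ℕ) : ℝ :=
  ∑ k ∈ Icc (i + 1) m, c k * Ssum ta (i + 1) (k - 1)

section backSum
variable {ta : ℕ → ℕ → ℝ} {c : ℕ → ℝ} {i m : ℕ}

lemma backSum_self : backSum ta c i i = 0 := by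
  simp [backSum]

lemma backSum_succ : backSum ta c i (i + 1) = c (i + 1) := by
  simp [backSum, Ssum_of_lt]

lemma backSum_eq (h : i + 2 ≤ m) :
    backSum ta c i m = c (i + 1) + ta (i + 1) (i + 1) * backSum ta c (i + 1) m
      + ta (i + 1) (i + 2) * ta (i + 2) (i + 1) * backSum ta c (i + 2) m := by
  have htail : ∑ k ∈ Icc (i + 3) m, c k * Ssum ta (i + 1) (k - 1) =
      ta (i + 1) (i + 1) * ∑ k ∈ Icc (i + 3) m, c k * Ssum ta (i + 2) (k - 1)
        + ta (i + 1) (i + 2) * ta (i + 2) (i + 1) *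
          ∑ k ∈ Icc (i + 3) m, c k * Ssum ta (i + 3) (k - 1) := by
    rw [mul_sum, mul_sum, ← sum_add_distrib]
    refine sum_congr rfl fun k hk => ?_
    rw [Ssum_eq (by simp only [mem_Icc] at hk; omega)]
    ring
  simp only [backSum]
  rw [sum_Icc_eq_add_sum_Icc_succ _ (by omega : i + 1 ≤ m),
    sum_Icc_eq_add_sum_Icc_succ _ (by omega : i + 2 ≤ m),
    sum_Icc_eq_add_sum_Icc_succ _ (by omega : i + 2 ≤ m), htail]
  simp only [Nat.add_sub_cancel, show i + 2 - 1 = i + 1 from rfl,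
    Ssum_of_lt (Nat.lt_succ_self _), Ssum_self]
  ring

end backSum

section Ft
variable {n : ℕ} {ta : ℕ → ℕ → ℝ} {x : ℕ → ℝ}

lemma Ft_succ_of_lt {i : ℕ} (hi : 1 ≤ i) (hin : i + 1 < n) :
    Ft n ta x (i + 1) = -ta (i + 1) 0 + ta (i + 1) i * x i - ta (i + 1) (i + 1) * x (i + 1)
      - ta (i + 1) (i + 2) * x (i + 2) := by
  rw [Ft, if_neg (by omega), if_neg (by omega), Nat.add_sub_cancel]

lemma Ft_succ_self {m : ℕ} (hm : 1 ≤ m) :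
    Ft (m + 1) ta x (m + 1) =
      -ta (m + 1) 0 + ta (m + 1) m * x m - ta (m + 1) (m + 1) * x (m + 1) := by
  rw [Ft, if_neg (by omega), if_pos rfl, Nat.add_sub_cancel]

lemma mul_prod_eq_of_Ft_eq_zero (hx : ∀ i, 1 ≤ i → i ≤ n → Ft n ta x i = 0) (hn : 2 ≤ n)
    {i : ℕ} (hi : 1 ≤ i) (hin : i ≤ n) :
    x i * ∏ j ∈ Icc (i + 1) n, ta j (j - 1) =
      x n * Ssum ta (i + 1) n
        + backSum ta (fun k => ta k 0 * ∏ l ∈ Icc (k + 1) n, ta l (l - 1)) i n := by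
  have hP : ∀ k, k + 1 ≤ n →
      ∏ l ∈ Icc (k + 1) n, ta l (l - 1) =
        ta (k + 1) k * ∏ l ∈ Icc (k + 2) n, ta l (l - 1) :=
    fun k hk => by rw [prod_Icc_eq_mul_prod_Icc_succ _ hk, Nat.add_sub_cancel]
  refine eq_of_linear_recurrence (l := 1) (n := n)
    (α := fun i => ta (i + 1) 0 * ∏ l ∈ Icc (i + 2) n, ta l (l - 1))
    (β := fun i => ta (i + 1) (i + 1)) (γ := fun i => ta (i + 1) (i + 2) * ta (i + 2) (i + 1))
    (u := fun i => x i * ∏ j ∈ Icc (i + 1) n, ta j (j - 1))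
    (v := fun i => x n * Ssum ta (i + 1) n
      + backSum ta (fun k => ta k 0 * ∏ l ∈ Icc (k + 1) n, ta l (l - 1)) i n)
    (fun i hi hin => ?_) (fun i hi hin => ?_) ?_ ?_ hi hin
  · have hF := hx (i + 1) (by omega) (by omega)
    rw [Ft_succ_of_lt hi (by omega)] at hF
    linear_combination x i * hP i (by omega) + (∏ l ∈ Icc (i + 2) n, ta l (l - 1)) * hF
      + ta (i + 1) (i + 2) * x (i + 2) * hP (i + 1) (by omega)
  · simp only [Ssum_eq (by omega : i + 1 + 1 ≤ n), backSum_eq hin]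
    ring
  · rw [Icc_eq_empty_of_lt (Nat.lt_succ_self n), prod_empty, Ssum_of_lt (Nat.lt_succ_self n),
      backSum_self]
    ring
  · obtain ⟨m, rfl⟩ : ∃ m, n = m + 1 := ⟨n - 1, by omega⟩
    have hF := hx (m + 1) (by omega) le_rfl
    rw [Ft_succ_self (by omega)] at hF
    rw [Nat.add_sub_cancel, hP m le_rfl, Icc_eq_empty_of_lt (by omega : m + 1 < m + 2),
      prod_empty, Ssum_self, backSum_succ, Icc_eq_empty_of_lt (by omega : m + 1 < m + 1 + 1),
      prod_empty]
    linear_combination hF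

end Ft

theorem stmt2_general (n : ℕ) (ta : ℕ → ℕ → ℝ) :
    ∀ x : ℕ → ℝ, (∀ i, 1 ≤ i → i ≤ n → Ft n ta x i = 0) →
      ∀ i, 1 ≤ i → i ≤ n - 1 →
        x i * ∏ j ∈ Finset.Icc (i + 1) n, ta j (j - 1) =
          x n * Ssum ta (i + 1) n
            + ta (i + 1) 0 * ∏ j ∈ Finset.Icc (i + 2) n, ta j (j - 1)
            + ∑ k ∈ Finset.Icc (i + 2) n,
                ta k 0 * (∏ l ∈ Finset.Icc (k + 1) n, ta l (l - 1)) * Ssum ta (i + 1) (k - 1) := by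
  intro x hx i hi hin
  rw [mul_prod_eq_of_Ft_eq_zero hx (by omega) hi (by omega), backSum,
    sum_Icc_eq_add_sum_Icc_succ _ (by omega : i + 1 ≤ n), Nat.add_sub_cancel,
    Ssum_of_lt (Nat.lt_succ_self i)]
  ring

/-- Back-substitution identity for zeros of `F̃`: for `1 ≤ i ≤ n−1`,
`x_i Π_{j=i+1}^{n} ã_{j,j−1} = x_n S_{i+1}^{n} + ã_{i+1,0} Π_{j=i+2}^{n} ã_{j,j−1}
  + Σ_{k=i+2}^{n} ã_{k0} (Π_{l=k+1}^{n} ã_{l,l−1}) S_{i+1}^{k−1}`. -/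
theorem stmt2 (n : ℕ) (hn : 2 ≤ n) (ta : ℕ → ℕ → ℝ)
    (hi0 : ∀ i, 2 ≤ i → i ≤ n → 0 < ta i 0)
    (h11 : 0 < ta 1 1)
    (hii : ∀ i, 2 ≤ i → i ≤ n → 0 ≤ ta i i)
    (hlow : ∀ i, 2 ≤ i → i ≤ n → 0 < ta i (i - 1))
    (hup : ∀ i, 1 ≤ i → i ≤ n - 1 → 0 < ta i (i + 1)) :
    ∀ x : ℕ → ℝ, (∀ i, 1 ≤ i → i ≤ n → Ft n ta x i = 0) →
      ∀ i, 1 ≤ i → i ≤ n - 1 →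
        x i * ∏ j ∈ Finset.Icc (i + 1) n, ta j (j - 1) =
          x n * Ssum ta (i + 1) n
            + ta (i + 1) 0 * ∏ j ∈ Finset.Icc (i + 2) n, ta j (j - 1)
            + ∑ k ∈ Finset.Icc (i + 2) n,
                ta k 0 * (∏ l ∈ Finset.Icc (k + 1) n, ta l (l - 1)) * Ssum ta (i + 1) (k - 1) :=
  stmt2_general n ta
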